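/- Let {𝒜_k}_{k≥1} be a sequence of labyrinth patterns with widths m_k ≥ 3, and let n ≥ 1. Then from every black square of level n there is a path in the graph 𝒢(ℬ_n) to a black border square of level n. -/

import Mathlib

open Set

namespace Labyrinth

/-- The closed square `S_{i,j,m} = [i/m,(i+1)/m] × [j/m,(j+1)/m]` of the `m × m` grid
on the unit square, indexed by `p = (i,j)`. -/
def cell (m : ℕ) (p : ℕ × ℕ) : Set (ℝ × ℝ) :=
  Icc ((p.1 : ℝ) / (m : ℝ)) (((p.1 : ℝ) + 1) / (m : ℝ)) ×ˢ
    Icc ((p.2 : ℝ) / (m : ℝ)) (((p.2 : ℝ) + 1) / (m : ℝ))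

/-- An `m`-pattern: a nonempty set of grid indices within the `m × m` grid. -/
def IsPattern (m : ℕ) (A : Set (ℕ × ℕ)) : Prop :=
  A.Nonempty ∧ ∀ p ∈ A, p.1 < m ∧ p.2 < m

/-- Two grid squares share a side. -/
def SideAdj (p q : ℕ × ℕ) : Prop :=
  (p.1 = q.1 ∧ (p.2 + 1 = q.2 ∨ q.2 + 1 = p.2)) ∨
  (p.2 = q.2 ∧ (p.1 + 1 = q.1 ∨ q.1 + 1 = p.1))

/-- Two grid squares share a side or a corner. -/
def CornerAdj (p q : ℕ × ℕ) : Prop :=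
  SideAdj p q ∨
  ((p.1 + 1 = q.1 ∨ q.1 + 1 = p.1) ∧ (p.2 + 1 = q.2 ∨ q.2 + 1 = p.2))

/-- The graph `𝒢(𝒜)` of a pattern: vertices are its squares, two squares being
adjacent iff they share a side. -/
def patternGraph (A : Set (ℕ × ℕ)) : SimpleGraph ↥A where
  Adj p q := SideAdj p.1 q.1
  symm := by
    constructor
    rintro ⟨p, hp⟩ ⟨q, hq⟩ h
    rcases h with ⟨h1, h2⟩ | ⟨h1, h2⟩
    · exact Or.inl ⟨h1.symm, h2.symm⟩
    · exact Or.inr ⟨h1.symm, h2.symm⟩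
  loopless := by
    constructor
    rintro ⟨p, hp⟩ h
    rcases h with ⟨h1, h2 | h2⟩ | ⟨h1, h2 | h2⟩ <;> omega

/-- The four sides of a square/pattern. -/
inductive Side | top | bottom | left | right
deriving DecidableEq

/-- `p` is an exit square of the `m`-pattern `A` on the given side. -/
def IsExitSq (m : ℕ) (A : Set (ℕ × ℕ)) : Side → ℕ × ℕ → Prop
  | .top, p => p ∈ A ∧ p.2 = m - 1 ∧ (p.1, 0) ∈ A
  | .bottom, p => p ∈ A ∧ p.2 = 0 ∧ (p.1, m - 1) ∈ A
  | .left, p => p ∈ A ∧ p.1 = 0 ∧ (m - 1, p.2) ∈ A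
  | .right, p => p ∈ A ∧ p.1 = m - 1 ∧ (0, p.2) ∈ A

/-- An `m × m`-labyrinth pattern: a nonempty `m`-pattern, `m ≥ 3`, whose graph is a tree,
with exactly one vertical and exactly one horizontal exit pair, and no two white squares
at diagonally opposite corners. -/
def IsLabyrinthPattern (m : ℕ) (A : Set (ℕ × ℕ)) : Prop :=
  3 ≤ m ∧ IsPattern m A ∧ (patternGraph A).IsTree ∧
    (∃! i : ℕ, (i, m - 1) ∈ A ∧ (i, 0) ∈ A) ∧
    (∃! j : ℕ, (0, j) ∈ A ∧ (m - 1, j) ∈ A) ∧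
    ((0, 0) ∈ A → (m - 1, m - 1) ∉ A) ∧
    ((m - 1, 0) ∈ A → (0, m - 1) ∉ A)

/-- A wild labyrinth pattern: the graph is merely connected, and there is at least one
vertical and at least one horizontal exit pair. -/
def IsWildLabyrinthPattern (m : ℕ) (A : Set (ℕ × ℕ)) : Prop :=
  3 ≤ m ∧ IsPattern m A ∧ (patternGraph A).Connected ∧
    (∃ i : ℕ, (i, m - 1) ∈ A ∧ (i, 0) ∈ A) ∧
    (∃ j : ℕ, (0, j) ∈ A ∧ (m - 1, j) ∈ A) ∧
    ((0, 0) ∈ A → (m - 1, m - 1) ∉ A) ∧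
    ((m - 1, 0) ∈ A → (0, m - 1) ∉ A)

/-- One substitution step: place a copy of the pattern `A'` (of width `m'`) into each
white square of `W`. -/
def subst (m' : ℕ) (A' W : Set (ℕ × ℕ)) : Set (ℕ × ℕ) :=
  {q | ∃ p ∈ W, ∃ r ∈ A', q = (p.1 * m' + r.1, p.2 * m' + r.2)}

/-- The white squares `𝒲_n` of level `n`; `whites m A n` is the paper's `𝒲_n`, where
`A k` is the paper's pattern `𝒜_{k+1}` of width `m k = m_{k+1}`; level `0` is the whole
unit square. -/
def whites (m : ℕ → ℕ) (A : ℕ → Set (ℕ × ℕ)) : ℕ → Set (ℕ × ℕ)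
  | 0 => {(0, 0)}
  | n + 1 => subst (m n) (A n) (whites m A n)

/-- `m(n) = m_1 ⋯ m_n`. -/
def mProd (m : ℕ → ℕ) (n : ℕ) : ℕ := ∏ k ∈ Finset.range n, m k

/-- The black squares `ℬ_n` of level `n`. -/
def blacks (m : ℕ → ℕ) (A : ℕ → Set (ℕ × ℕ)) (n : ℕ) : Set (ℕ × ℕ) :=
  {p : ℕ × ℕ | p.1 < mProd m n ∧ p.2 < mProd m n} \ whites m A n

/-- A border square of the `m × m` grid. -/
def IsBorder (m : ℕ) (p : ℕ × ℕ) : Prop :=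
  p.1 = 0 ∨ p.2 = 0 ∨ p.1 = m - 1 ∨ p.2 = m - 1

/-- `L_n`, the union of the white squares of level `n`. -/
def levelSet (m : ℕ → ℕ) (A : ℕ → Set (ℕ × ℕ)) (n : ℕ) : Set (ℝ × ℝ) :=
  ⋃ p ∈ whites m A n, cell (mProd m n) p

/-- `L_∞ = ⋂_{n ≥ 1} L_n` (the term `n = 0` is the whole unit square). -/
def limitSet (m : ℕ → ℕ) (A : ℕ → Set (ℕ × ℕ)) : Set (ℝ × ℝ) :=
  ⋂ n, levelSet m A n

def unitSquare : Set (ℝ × ℝ) := Icc (0 : ℝ) 1 ×ˢ Icc (0 : ℝ) 1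

/-- A path in a graph (with adjacency `Adj`, within the vertex set `A`)
from `u` to `v`: a nonempty list of distinct, consecutively adjacent squares of `A`,
starting at `u` and ending at `v`. -/
def IsPathIn (Adj : ℕ × ℕ → ℕ × ℕ → Prop) (A : Set (ℕ × ℕ))
    (l : List (ℕ × ℕ)) (u v : ℕ × ℕ) : Prop :=
  l ≠ [] ∧ l.Nodup ∧ l.Chain' Adj ∧ (∀ p ∈ l, p ∈ A) ∧
    l.head? = some u ∧ l.getLast? = some v

/-- `s` is an arc between `a` and `b`: a homeomorphic image of `[0,1]`
with endpoints `a` and `b`. -/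
def IsArc (s : Set (ℝ × ℝ)) (a b : ℝ × ℝ) : Prop :=
  ∃ f : ℝ → ℝ × ℝ, ContinuousOn f (Icc 0 1) ∧ InjOn f (Icc 0 1) ∧
    f '' Icc 0 1 = s ∧ f 0 = a ∧ f 1 = b

/-- `e` is the exit point of `L_∞` of the given type: for every `n ≥ 1` it lies in the
exit square of that type of `𝒲_n`. -/
def IsExitPoint (m : ℕ → ℕ) (A : ℕ → Set (ℕ × ℕ)) (s : Side) (e : ℝ × ℝ) : Prop :=
  ∀ n, 1 ≤ n → ∃ p, IsExitSq (mProd m n) (whites m A n) s p ∧ e ∈ cell (mProd m n) p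

/-- The (closed) edge of the grid square `p` of the `m × m` grid on the given side. -/
def cellEdge (m : ℕ) (p : ℕ × ℕ) : Side → Set (ℝ × ℝ)
  | .top => Icc ((p.1 : ℝ) / (m : ℝ)) (((p.1 : ℝ) + 1) / (m : ℝ)) ×ˢ {((p.2 : ℝ) + 1) / (m : ℝ)}
  | .bottom => Icc ((p.1 : ℝ) / (m : ℝ)) (((p.1 : ℝ) + 1) / (m : ℝ)) ×ˢ {(p.2 : ℝ) / (m : ℝ)}
  | .left => {(p.1 : ℝ) / (m : ℝ)} ×ˢ Icc ((p.2 : ℝ) / (m : ℝ)) (((p.2 : ℝ) + 1) / (m : ℝ))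
  | .right => {((p.1 : ℝ) + 1) / (m : ℝ)} ×ˢ Icc ((p.2 : ℝ) / (m : ℝ)) (((p.2 : ℝ) + 1) / (m : ℝ))

/-- Directions in the grid. -/
inductive Dir | up | down | left | right
deriving DecidableEq

/-- `stepDir p q d`: the square `q` is the neighbour of `p` in direction `d`. -/
def stepDir (p q : ℕ × ℕ) : Dir → Prop
  | .up => q.1 = p.1 ∧ q.2 = p.2 + 1
  | .down => q.1 = p.1 ∧ p.2 = q.2 + 1
  | .left => q.2 = p.2 ∧ p.1 = q.1 + 1
  | .right => q.2 = p.2 ∧ q.1 = p.1 + 1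

/-- The outward direction through a given side. -/
def outDir : Side → Dir
  | .top => .up
  | .bottom => .down
  | .left => .left
  | .right => .right

def sideOfDir : Dir → Side
  | .up => .top
  | .down => .bottom
  | .left => .left
  | .right => .right

/-- The six types `A, B, C, D, E, F` of paths (and of squares within a path). -/
inductive PTy | A | B | C | D | E | F
deriving DecidableEq

instance instFintypePTy : Fintype PTy :=
  ⟨{.A, .B, .C, .D, .E, .F}, by intro x; cases x <;> simp⟩

/-- The exit at which the `x`-path starts: `A`: top→bottom, `B`: left→right,
`C`: top→right, `D`: right→bottom, `E`: bottom→left, `F`: left→top. -/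
def startSide : PTy → Side
  | .A => .top
  | .B => .left
  | .C => .top
  | .D => .right
  | .E => .bottom
  | .F => .left

/-- The exit at which the `x`-path ends. -/
def endSide : PTy → Side
  | .A => .bottom
  | .B => .right
  | .C => .right
  | .D => .bottom
  | .E => .left
  | .F => .top

/-- The two neighbour directions characterising a square of each type. -/
def ptyDirPair : PTy → Dir × Dir
  | .A => (.up, .down)
  | .B => (.left, .right)
  | .C => (.up, .right)
  | .D => (.right, .down)
  | .E => (.down, .left)
  | .F => (.left, .up)

def ptyDirs (τ : PTy) : Set Dir := {(ptyDirPair τ).1, (ptyDirPair τ).2}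

/-- The set of directions from the `i`-th square of the path `l` towards its neighbours
within the path, where the first and last squares (exit squares) are regarded as having
an additional neighbour outside the unit square, in directions `dstart`, `dend`
respectively. -/
def pathDirs (l : List (ℕ × ℕ)) (dstart dend : Dir) (i : ℕ) : Set Dir :=
  {d | (∃ p q, l[i]? = some p ∧ l[i - 1]? = some q ∧ 0 < i ∧ stepDir p q d)
    ∨ (∃ p q, l[i]? = some p ∧ l[i + 1]? = some q ∧ stepDir p q d)
    ∨ (i = 0 ∧ d = dstart)
    ∨ (i + 1 = l.length ∧ d = dend)}

/-- The number of `τ`-squares of the path `l` (with outward exit directions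
`dstart`, `dend`). -/
noncomputable def countTy (l : List (ℕ × ℕ)) (dstart dend : Dir) (τ : PTy) : ℕ :=
  {i | i < l.length ∧ pathDirs l dstart dend i = ptyDirs τ}.ncard

/-- `M(n) = M_1 ⋅ M_2 ⋅ ⋯ ⋅ M_n`. -/
def matProd (M : ℕ → Matrix PTy PTy ℕ) (n : ℕ) : Matrix PTy PTy ℕ :=
  ((List.range n).map M).prod

/-- A simple closed curve: a subspace homeomorphic to the circle. -/
def IsSimpleClosedCurve (s : Set (ℝ × ℝ)) : Prop :=
  Nonempty (↥s ≃ₜ AddCircle (1 : ℝ))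

/-- The number of `δ`-mesh squares meeting `E`. -/
noncomputable def meshCount (δ : ℝ) (E : Set (ℝ × ℝ)) : ℕ :=
  {q : ℤ × ℤ | (E ∩ (Icc ((q.1 : ℝ) * δ) (((q.1 : ℝ) + 1) * δ) ×ˢ
      Icc ((q.2 : ℝ) * δ) (((q.2 : ℝ) + 1) * δ))).Nonempty}.ncard

/-- The lower box-counting dimension of `E ⊆ ℝ²`. -/
noncomputable def lowerBoxDim (E : Set (ℝ × ℝ)) : ℝ :=
  Filter.liminf (fun δ : ℝ => Real.log (meshCount δ E) / (-Real.log δ)) (nhdsWithin 0 (Ioi 0))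

/-- The upper box-counting dimension of `E ⊆ ℝ²`. -/
noncomputable def upperBoxDim (E : Set (ℝ × ℝ)) : ℝ :=
  Filter.limsup (fun δ : ℝ => Real.log (meshCount δ E) / (-Real.log δ)) (nhdsWithin 0 (Ioi 0))

end Labyrinth

/-!
Call a set of grid squares *one-degenerate* if each of its finite nonempty subsets contains a
square with at most one side-neighbour in that subset (a leaf).

The white squares `𝒲_n` are one-degenerate. Given finitely many white squares of level `n + 1`,
take a leaf block among the level-`n` squares containing them. Inside that block the squares form a
subforest of the tree `𝒢(𝒜_{n+1})`; a neighbour in another block lies in the unique adjacent block,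
and is reached through the unique exit pair of `𝒜_{n+1}` on that side, so at most one square of the
block has such a neighbour. Hence some leaf of the subforest is a leaf of the whole set.

If a finite one-degenerate set `W` is surrounded by a black frame, every black square is joined to
the frame by king moves through black squares. By induction, remove a leaf `ℓ` of `W`: a king path
through `ℓ` can be rerouted, because at most one side-neighbour of `ℓ` is white, so the black
squares among the eight around `ℓ` are king-connected. The last square of such a path before it
reaches the frame is a black border square.
-/

namespace SimpleGraph

variable {V : Type*} {G : SimpleGraph V}

theorem IsAcyclic.neighborSet_subsingleton_of_longest (hG : G.IsAcyclic) {u v : V}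
    {p : G.Walk u v} (hp : p.IsPath)
    (hmax : ∀ (u' v' : V) (p' : G.Walk u' v'), p'.IsPath → p'.length ≤ p.length) :
    (G.neighborSet u).Subsingleton := by
  have hsnd : ∀ a ∈ G.neighborSet u, a = p.snd := fun a ha => by
    refine hG.eq_snd_of_adj_start hp ha (by_contra fun ha' => ?_)
    have := hmax _ _ _ (hp.cons ha' (h := G.adj_symm ha))
    simp at this
  exact fun a ha b hb => (hsnd a ha).trans (hsnd b hb).symm

theorem IsAcyclic.exists_ne_neighborSet_subsingleton [Finite V] (hG : G.IsAcyclic) {w x : V}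
    (hxw : x ≠ w) : ∃ v, v ≠ w ∧ (G.neighborSet v).Subsingleton := by
  have : Nonempty V := ⟨x⟩
  obtain ⟨u, v, p, hp, hmax⟩ := Walk.exists_isPath_forall_isPath_length_le_length G
  by_cases hnil : p.Nil
  · refine ⟨x, hxw, fun a ha => ?_⟩
    have := hmax _ _ _ (Path.singleton ha).2
    rw [hnil.length_eq_zero] at this
    exact (Nat.not_succ_le_zero 0 this).elim
  · have huv : u ≠ v := fun h => hnil (hp.nil_iff_eq.mpr h)
    have hu := hG.neighborSet_subsingleton_of_longest hp hmax
    have hv := hG.neighborSet_subsingleton_of_longest hp.reverse (by simpa using hmax)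
    by_cases huw : u = w
    · exact ⟨v, huw ▸ huv.symm, hv⟩
    · exact ⟨u, huw, hu⟩

end SimpleGraph

namespace Labyrinth

open SimpleGraph

def grid (M : ℕ) : Set (ℕ × ℕ) := {p | p.1 < M ∧ p.2 < M}

theorem SideAdj.ne {p q : ℕ × ℕ} (h : SideAdj p q) : p ≠ q := by
  rintro rfl; unfold SideAdj at h; omega

theorem CornerAdj.symm {p q : ℕ × ℕ} (h : CornerAdj p q) : CornerAdj q p := by
  unfold CornerAdj SideAdj at *; omega

theorem CornerAdj.ne {p q : ℕ × ℕ} (h : CornerAdj p q) : p ≠ q := by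
  rintro rfl; unfold CornerAdj SideAdj at h; omega

theorem sideAdj_iff_exists_stepDir {p q : ℕ × ℕ} : SideAdj p q ↔ ∃ d, stepDir p q d := by
  constructor
  · rintro (⟨h1, h2 | h2⟩ | ⟨h1, h2 | h2⟩)
    exacts [⟨.up, h1.symm, h2.symm⟩, ⟨.down, h1.symm, h2.symm⟩, ⟨.right, h1.symm, h2.symm⟩,
      ⟨.left, h1.symm, h2.symm⟩]
  · rintro ⟨d, h⟩
    cases d <;> (simp only [stepDir] at h; unfold SideAdj; omega)

theorem stepDir_dir_eq {p q : ℕ × ℕ} {d d' : Dir} (h : stepDir p q d) (h' : stepDir p q d') :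
    d = d' := by
  cases d <;> cases d' <;> simp only [stepDir] at h h' <;> first | rfl | omega

theorem stepDir_right_eq {p q q' : ℕ × ℕ} {d : Dir} (h : stepDir p q d) (h' : stepDir p q' d) :
    q = q' := by
  cases d <;> simp only [stepDir] at h h' <;> exact Prod.ext (by omega) (by omega)

-- Shifting by `(1, 1)` leaves room for a black frame around the grid, so that every white square
-- has all eight king-neighbours in `ℕ × ℕ`.
def shift (p : ℕ × ℕ) : ℕ × ℕ := (p.1 + 1, p.2 + 1)

theorem shift_injective : Function.Injective shift := fun p q h => by
  simp only [shift, Prod.mk.injEq] at h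
  exact Prod.ext (by omega) (by omega)

theorem sideAdj_shift_iff {p q : ℕ × ℕ} : SideAdj (shift p) (shift q) ↔ SideAdj p q := by
  unfold SideAdj shift; omega

theorem cornerAdj_shift_iff {p q : ℕ × ℕ} : CornerAdj (shift p) (shift q) ↔ CornerAdj p q := by
  unfold CornerAdj SideAdj shift; omega

def IsLeafIn (S : Set (ℕ × ℕ)) (w : ℕ × ℕ) : Prop :=
  ∀ u ∈ S, ∀ v ∈ S, SideAdj w u → SideAdj w v → u = v

def IsOneDegenerate (W : Set (ℕ × ℕ)) : Prop :=
  ∀ S ⊆ W, S.Finite → S.Nonempty → ∃ w ∈ S, IsLeafIn S w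

theorem IsLeafIn.notMem {S : Set (ℕ × ℕ)} {ℓ u v : ℕ × ℕ} (h : IsLeafIn S ℓ) (hu : u ∈ S)
    (hℓu : SideAdj ℓ u) (hℓv : SideAdj ℓ v) (huv : u ≠ v) : v ∉ S :=
  fun hv => huv (h u hu v hv hℓu hℓv)

theorem IsOneDegenerate.mono {W W' : Set (ℕ × ℕ)} (h : IsOneDegenerate W) (hW' : W' ⊆ W) :
    IsOneDegenerate W' :=
  fun S hS => h S (hS.trans hW')

theorem IsOneDegenerate.image_shift {W : Set (ℕ × ℕ)} (h : IsOneDegenerate W) :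
    IsOneDegenerate (shift '' W) := by
  intro S hS hfin hne
  have hpre : shift ⁻¹' S ⊆ W := fun a ha => by
    obtain ⟨w, hw, he⟩ := hS ha
    exact shift_injective he ▸ hw
  obtain ⟨s, hs⟩ := hne
  obtain ⟨s₀, -, rfl⟩ := hS hs
  obtain ⟨c, hc, hleaf⟩ := h _ hpre (hfin.preimage shift_injective.injOn) ⟨s₀, hs⟩
  refine ⟨shift c, hc, fun u hu v hv hcu hcv => ?_⟩
  obtain ⟨u₀, -, rfl⟩ := hS hu
  obtain ⟨v₀, -, rfl⟩ := hS hv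
  exact congrArg shift (hleaf u₀ hu v₀ hv (sideAdj_shift_iff.1 hcu) (sideAdj_shift_iff.1 hcv))

def kingGraph (S : Set (ℕ × ℕ)) : SimpleGraph (ℕ × ℕ) where
  Adj p q := CornerAdj p q ∧ p ∈ S ∧ q ∈ S
  symm := ⟨fun _ _ h => ⟨h.1.symm, h.2.2, h.2.1⟩⟩
  loopless := ⟨fun _ h => h.1.ne rfl⟩

theorem kingGraph_reachable_of_near {S : Set (ℕ × ℕ)} {p q : ℕ × ℕ} (hp : p ∈ S) (hq : q ∈ S)
    (h : p.1 ≤ q.1 + 1 ∧ q.1 ≤ p.1 + 1 ∧ p.2 ≤ q.2 + 1 ∧ q.2 ≤ p.2 + 1) :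
    (kingGraph S).Reachable p q := by
  by_cases hpq : p = q
  · exact hpq ▸ .refl _
  · rw [Prod.ext_iff] at hpq
    exact Adj.reachable ⟨by unfold CornerAdj SideAdj; omega, hp, hq⟩

theorem kingGraph_univ_reachable (p q : ℕ × ℕ) : (kingGraph univ).Reachable p q := by
  suffices h : ∀ p : ℕ × ℕ, (kingGraph univ).Reachable p (0, 0) from (h p).trans (h q).symm
  rintro ⟨a, b⟩
  induction a with
  | zero =>
    induction b with
    | zero => rfl
    | succ b ih =>
      exact (kingGraph_reachable_of_near (mem_univ _) (mem_univ _) (by omega)).trans ih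
  | succ a ih => exact (kingGraph_reachable_of_near (mem_univ _) (mem_univ _) (by omega)).trans ih

theorem kingGraph_reachable_north {W : Set (ℕ × ℕ)} {a b : ℕ} {x : ℕ × ℕ}
    (hN : (a, b + 1) ∉ W) (hS : (a, b - 1) ∉ W) (hmid : (a + 1, b) ∉ W ∨ (a - 1, b) ∉ W)
    (hx : x ∉ W) (hxℓ : CornerAdj x (a, b)) : (kingGraph Wᶜ).Reachable x (a, b + 1) := by
  have hSN : (kingGraph Wᶜ).Reachable (a, b - 1) (a, b + 1) := by
    rcases hmid with h | h <;>
      exact (kingGraph_reachable_of_near hS h (by omega)).trans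
        (kingGraph_reachable_of_near h hN (by omega))
  unfold CornerAdj SideAdj at hxℓ
  by_cases hxb : x.2 + 1 = b
  · exact (kingGraph_reachable_of_near hx hS (by omega)).trans hSN
  · exact kingGraph_reachable_of_near hx hN (by omega)

theorem kingGraph_reachable_east {W : Set (ℕ × ℕ)} {a b : ℕ} {x : ℕ × ℕ}
    (hE : (a + 1, b) ∉ W) (hW : (a - 1, b) ∉ W) (hmid : (a, b + 1) ∉ W ∨ (a, b - 1) ∉ W)
    (hx : x ∉ W) (hxℓ : CornerAdj x (a, b)) : (kingGraph Wᶜ).Reachable x (a + 1, b) := by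
  have hWE : (kingGraph Wᶜ).Reachable (a - 1, b) (a + 1, b) := by
    rcases hmid with h | h <;>
      exact (kingGraph_reachable_of_near hW h (by omega)).trans
        (kingGraph_reachable_of_near h hE (by omega))
  unfold CornerAdj SideAdj at hxℓ
  by_cases hxa : x.1 + 1 = a
  · exact (kingGraph_reachable_of_near hx hW (by omega)).trans hWE
  · exact kingGraph_reachable_of_near hx hE (by omega)

/-- At most one side-neighbour of `ℓ` is white, so the two vertical or the two horizontal ones are
black, and every black square around `ℓ` reaches the upper, resp. right, one of them. -/
theorem IsLeafIn.kingGraph_reachable {W : Set (ℕ × ℕ)} {ℓ x y : ℕ × ℕ}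
    (hℓ : 1 ≤ ℓ.1 ∧ 1 ≤ ℓ.2) (hleaf : IsLeafIn W ℓ) (hx : x ∉ W) (hy : y ∉ W)
    (hxℓ : CornerAdj x ℓ) (hyℓ : CornerAdj y ℓ) : (kingGraph Wᶜ).Reachable x y := by
  obtain ⟨a, b⟩ := ℓ
  obtain ⟨ha, hb⟩ : 1 ≤ a ∧ 1 ≤ b := hℓ
  have sN : SideAdj (a, b) (a, b + 1) := by unfold SideAdj; omega
  have sS : SideAdj (a, b) (a, b - 1) := by unfold SideAdj; omega
  have sE : SideAdj (a, b) (a + 1, b) := by unfold SideAdj; omega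
  have sW : SideAdj (a, b) (a - 1, b) := by unfold SideAdj; omega
  by_cases hv : (a, b + 1) ∉ W ∧ (a, b - 1) ∉ W
  · have hmid : (a + 1, b) ∉ W ∨ (a - 1, b) ∉ W := by
      refine or_iff_not_imp_left.2 fun h => hleaf.notMem (not_not.1 h) sE sW ?_
      simp only [ne_eq, Prod.mk.injEq]; omega
    exact (kingGraph_reachable_north hv.1 hv.2 hmid hx hxℓ).trans
      (kingGraph_reachable_north hv.1 hv.2 hmid hy hyℓ).symm
  · have hNS : (a, b + 1) ∈ W ∨ (a, b - 1) ∈ W := by tauto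
    have hE : (a + 1, b) ∉ W := by
      rcases hNS with h | h
      · exact hleaf.notMem h sN sE (by simp)
      · exact hleaf.notMem h sS sE (by simp)
    have hW : (a - 1, b) ∉ W := by
      rcases hNS with h | h
      · exact hleaf.notMem h sN sW (by simp)
      · exact hleaf.notMem h sS sW (by simp only [ne_eq, Prod.mk.injEq]; omega)
    have hmid : (a, b + 1) ∉ W ∨ (a, b - 1) ∉ W := by
      refine or_iff_not_imp_left.2 fun h => hleaf.notMem (not_not.1 h) sN sS ?_
      simp only [ne_eq, Prod.mk.injEq]; omega
    exact (kingGraph_reachable_east hE hW hmid hx hxℓ).trans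
      (kingGraph_reachable_east hE hW hmid hy hyℓ).symm

/-- The second conjunct is the invariant that lets a walk through the whitened square `ℓ` be
rerouted around it. -/
theorem reachable_of_walk_diff_leaf {W : Set (ℕ × ℕ)} {ℓ z : ℕ × ℕ} (hℓ : 1 ≤ ℓ.1 ∧ 1 ≤ ℓ.2)
    (hℓW : ℓ ∈ W) (hleaf : IsLeafIn W ℓ) (hz : z ∉ W) {q : ℕ × ℕ}
    (w : (kingGraph (W \ {ℓ})ᶜ).Walk q z) :
    (q ∉ W → (kingGraph Wᶜ).Reachable q z) ∧
      (q = ℓ → ∀ x ∉ W, CornerAdj x ℓ → (kingGraph Wᶜ).Reachable x z) := by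
  induction w with
  | nil => exact ⟨fun _ => .refl _, fun h => absurd (h ▸ hℓW) hz⟩
  | @cons q q' _ h w ih =>
    specialize ih hz
    have hq' : q' ≠ ℓ → q' ∉ W := fun hne hmem => h.2.2 ⟨hmem, hne⟩
    refine ⟨fun hq => ?_, ?_⟩
    · by_cases hq'ℓ : q' = ℓ
      · exact ih.2 hq'ℓ q hq (hq'ℓ ▸ h.1)
      · have hqq' : (kingGraph Wᶜ).Adj q q' := ⟨h.1, hq, hq' hq'ℓ⟩
        exact hqq'.reachable.trans (ih.1 (hq' hq'ℓ))
    · rintro rfl x hx hxq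
      have hne : q' ≠ q := h.1.ne.symm
      exact (hleaf.kingGraph_reachable hℓ hx (hq' hne) hxq h.1.symm).trans (ih.1 (hq' hne))

theorem IsOneDegenerate.exists_reachable_notMem {R : Set (ℕ × ℕ)} {K : ℕ}
    (hR : ∀ z ∈ R, 1 ≤ z.1 ∧ 1 ≤ z.2 ∧ z.2 < K) {W : Set (ℕ × ℕ)} (hdeg : IsOneDegenerate W)
    (hfin : W.Finite) (hWR : W ⊆ R) {p : ℕ × ℕ} (hp : p ∉ W) :
    ∃ z ∉ R, (kingGraph Wᶜ).Reachable p z := by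
  obtain ⟨F, rfl⟩ := hfin.exists_finset_coe
  clear hfin
  induction F using Finset.strongInduction generalizing p with
  | H F ih =>
  rcases F.eq_empty_or_nonempty with rfl | hne
  · refine ⟨(0, K), fun h => (hR _ h).2.2.false, ?_⟩
    simpa using kingGraph_univ_reachable p (0, K)
  · obtain ⟨ℓ, hℓ, hleaf⟩ := hdeg _ subset_rfl F.finite_toSet hne
    obtain ⟨hℓ1, hℓ2, -⟩ := hR ℓ (hWR hℓ)
    have hsub : ↑(F.erase ℓ) ⊆ (↑F : Set (ℕ × ℕ)) := Finset.coe_subset.2 (F.erase_subset ℓ)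
    obtain ⟨z, hzR, hreach⟩ := ih _ (Finset.erase_ssubset hℓ) (hdeg.mono hsub) (hsub.trans hWR)
      (fun h => hp (hsub h))
    rw [Finset.coe_erase] at hreach
    exact ⟨z, hzR, (reachable_of_walk_diff_leaf ⟨hℓ1, hℓ2⟩ hℓ hleaf (fun h => hzR (hWR h))
      hreach.some).1 hp⟩

theorem isBorder_of_cornerAdj_shift {M : ℕ} {q z : ℕ × ℕ} (hq : q ∈ grid M)
    (hz : z ∉ shift '' grid M) (h : CornerAdj (shift q) z) : IsBorder M q := by
  by_contra hb
  obtain ⟨hq1, hq2⟩ := hq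
  unfold IsBorder at hb
  unfold CornerAdj SideAdj shift at h
  exact hz ⟨(z.1 - 1, z.2 - 1), ⟨by omega, by omega⟩,
    Prod.ext (by simp only [shift]; omega) (by simp only [shift]; omega)⟩

theorem exists_isBorder_of_walk_shift {M : ℕ} {W : Set (ℕ × ℕ)} {q' z : ℕ × ℕ}
    (w : (kingGraph (shift '' W)ᶜ).Walk q' z) (hz : z ∉ shift '' grid M) {q : ℕ × ℕ}
    (hq : q ∈ grid M \ W) (hqq' : shift q = q') :
    ∃ b ∈ grid M \ W, IsBorder M b ∧ (kingGraph (grid M \ W)).Reachable q b := by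
  induction w generalizing q with
  | nil => exact absurd ⟨q, hq.1, hqq'⟩ hz
  | @cons _ r' _ h w ih =>
    subst hqq'
    by_cases hr' : r' ∈ shift '' grid M
    · obtain ⟨r, hr, rfl⟩ := hr'
      have hrW : r ∉ W := fun hrW => h.2.2 ⟨r, hrW, rfl⟩
      obtain ⟨b, hb, hbB, hrb⟩ := ih hz ⟨hr, hrW⟩ rfl
      have hqr : (kingGraph (grid M \ W)).Adj q r := ⟨cornerAdj_shift_iff.1 h.1, hq, hr, hrW⟩
      exact ⟨b, hb, hbB, hqr.reachable.trans hrb⟩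
    · exact ⟨q, hq, isBorder_of_cornerAdj_shift hq.1 hr' h.1, .refl _⟩

theorem exists_isPathIn_of_reachable {S : Set (ℕ × ℕ)} {p b : ℕ × ℕ} (hp : p ∈ S)
    (h : (kingGraph S).Reachable p b) : ∃ l, IsPathIn CornerAdj S l p b := by
  obtain ⟨w⟩ := h
  have hch := w.bypass.isChain_adj_support
  refine ⟨w.bypass.support, w.bypass.support_ne_nil, w.bypass_isPath.support_nodup,
    hch.imp fun _ _ h => h.1, hch.induction _ _ (fun _ _ h _ => h.2.2) (fun _ => by simpa using hp),
    by simp [List.head?_eq_some_head w.bypass.support_ne_nil],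
    by simp [List.getLast?_eq_some_getLast w.bypass.support_ne_nil]⟩

theorem add_one_div_mod_cases {m : ℕ} (hm : 0 < m) (x : ℕ) :
    ((x + 1) / m = x / m ∧ (x + 1) % m = x % m + 1) ∨
      ((x + 1) / m = x / m + 1 ∧ x % m = m - 1 ∧ (x + 1) % m = 0) := by
  have hx := Nat.div_add_mod x m
  have hlt := Nat.mod_lt x hm
  by_cases h : x % m + 1 < m
  · exact .inl ((Nat.div_mod_unique hm).2 ⟨by omega, h⟩)
  · have hwrap : (x + 1) / m = x / m + 1 ∧ (x + 1) % m = 0 :=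
      (Nat.div_mod_unique hm).2 ⟨by rw [mul_add]; omega, hm⟩
    exact .inr ⟨hwrap.1, by omega, hwrap.2⟩

theorem IsExitSq.eq {m : ℕ} {A : Set (ℕ × ℕ)}
    (hvert : {i | (i, m - 1) ∈ A ∧ (i, 0) ∈ A}.Subsingleton)
    (hhor : {j | (0, j) ∈ A ∧ (m - 1, j) ∈ A}.Subsingleton) {s : Side} {p q : ℕ × ℕ}
    (hp : IsExitSq m A s p) (hq : IsExitSq m A s q) : p = q := by
  cases s <;> obtain ⟨hp, hp2, hp'⟩ := hp <;> obtain ⟨hq, hq2, hq'⟩ := hq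
  · exact Prod.ext (hvert ⟨by simpa [← hp2] using hp, hp'⟩ ⟨by simpa [← hq2] using hq, hq'⟩)
      (hp2.trans hq2.symm)
  · exact Prod.ext (hvert ⟨hp', by simpa [← hp2] using hp⟩ ⟨hq', by simpa [← hq2] using hq⟩)
      (hp2.trans hq2.symm)
  · exact Prod.ext (hp2.trans hq2.symm)
      (hhor ⟨by simpa [← hp2] using hp, hp'⟩ ⟨by simpa [← hq2] using hq, hq'⟩)
  · exact Prod.ext (hp2.trans hq2.symm)
      (hhor ⟨hp', by simpa [← hp2] using hp⟩ ⟨hq', by simpa [← hq2] using hq⟩)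

theorem isAcyclic_patternGraph_of_injOn {S A : Set (ℕ × ℕ)} {f : ℕ × ℕ → ℕ × ℕ}
    (hmaps : MapsTo f S A) (hinj : InjOn f S)
    (hadj : ∀ p ∈ S, ∀ q ∈ S, SideAdj p q → SideAdj (f p) (f q))
    (hA : (patternGraph A).IsAcyclic) : (patternGraph S).IsAcyclic :=
  hA.comap ⟨fun p => ⟨f p, hmaps p.2⟩, fun {p q} h => hadj p p.2 q q.2 h⟩
    fun p q h => Subtype.ext (hinj p.2 q.2 (congrArg Subtype.val h))

theorem exists_isLeafIn_ne {S : Set (ℕ × ℕ)} (hS : S.Finite) (hac : (patternGraph S).IsAcyclic)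
    {w x : ℕ × ℕ} (hw : w ∈ S) (hx : x ∈ S) (hxw : x ≠ w) : ∃ c ∈ S, c ≠ w ∧ IsLeafIn S c := by
  have := hS.to_subtype
  obtain ⟨c, hcw, hc⟩ :=
    hac.exists_ne_neighborSet_subsingleton (w := ⟨w, hw⟩) (x := ⟨x, hx⟩) (by simpa using hxw)
  refine ⟨c, c.2, fun h => hcw (Subtype.ext h), fun u hu v hv hcu hcv => ?_⟩
  exact congrArg Subtype.val (hc (show (patternGraph S).Adj c ⟨u, hu⟩ from hcu)
    (show (patternGraph S).Adj c ⟨v, hv⟩ from hcv))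

section Substitution

variable {m' : ℕ} {A' : Set (ℕ × ℕ)}

def block (m' : ℕ) (q : ℕ × ℕ) : ℕ × ℕ := (q.1 / m', q.2 / m')

def offset (m' : ℕ) (q : ℕ × ℕ) : ℕ × ℕ := (q.1 % m', q.2 % m')

theorem eq_of_block_eq_of_offset_eq {q q' : ℕ × ℕ} (hb : block m' q = block m' q')
    (ho : offset m' q = offset m' q') : q = q' := by
  simp only [block, offset, Prod.mk.injEq] at hb ho
  exact Prod.ext (by rw [← Nat.div_add_mod q.1 m', hb.1, ho.1, Nat.div_add_mod])
    (by rw [← Nat.div_add_mod q.2 m', hb.2, ho.2, Nat.div_add_mod])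

theorem mem_subst_iff (hm : 0 < m') (hA : A' ⊆ grid m') {W : Set (ℕ × ℕ)} {q : ℕ × ℕ} :
    q ∈ subst m' A' W ↔ block m' q ∈ W ∧ offset m' q ∈ A' := by
  constructor
  · rintro ⟨p, hp, r, hr, rfl⟩
    obtain ⟨hr1, hr2⟩ := hA hr
    have h1 : (p.1 * m' + r.1) / m' = p.1 ∧ (p.1 * m' + r.1) % m' = r.1 :=
      (Nat.div_mod_unique hm).2 ⟨by ring, hr1⟩
    have h2 : (p.2 * m' + r.2) / m' = p.2 ∧ (p.2 * m' + r.2) % m' = r.2 :=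
      (Nat.div_mod_unique hm).2 ⟨by ring, hr2⟩
    simp only [block, offset, h1, h2]
    exact ⟨hp, hr⟩
  · rintro ⟨hb, ho⟩
    exact ⟨_, hb, _, ho, Prod.ext (Nat.div_add_mod' q.1 m').symm (Nat.div_add_mod' q.2 m').symm⟩

theorem stepDir_block_or_offset (hm : 0 < m') {w u : ℕ × ℕ} {d : Dir}
    (hw : offset m' w ∈ A') (hu : offset m' u ∈ A') (h : stepDir w u d) :
    (block m' w = block m' u ∧ stepDir (offset m' w) (offset m' u) d) ∨
      (stepDir (block m' w) (block m' u) d ∧ IsExitSq m' A' (sideOfDir d) (offset m' w)) := by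
  obtain ⟨w1, w2⟩ := w
  obtain ⟨u1, u2⟩ := u
  cases d <;> obtain ⟨h1, h2⟩ := h <;> simp only at h1 h2 <;> subst h1 h2
  · rcases add_one_div_mod_cases hm w2 with ⟨hd, hr⟩ | ⟨hd, hw2, hr⟩
    · left; simp_all [block, offset, stepDir]
    · right; simp_all [block, offset, stepDir, IsExitSq, sideOfDir]
  · rcases add_one_div_mod_cases hm u2 with ⟨hd, hr⟩ | ⟨hd, hu2, hr⟩
    · left; simp_all [block, offset, stepDir]
    · right; simp_all [block, offset, stepDir, IsExitSq, sideOfDir]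
  · rcases add_one_div_mod_cases hm u1 with ⟨hd, hr⟩ | ⟨hd, hu1, hr⟩
    · left; simp_all [block, offset, stepDir]
    · right; simp_all [block, offset, stepDir, IsExitSq, sideOfDir]
  · rcases add_one_div_mod_cases hm w1 with ⟨hd, hr⟩ | ⟨hd, hw1, hr⟩
    · left; simp_all [block, offset, stepDir]
    · right; simp_all [block, offset, stepDir, IsExitSq, sideOfDir]

theorem eq_of_sideAdj_of_isLeafIn_block (hm : 0 < m')
    (hvert : {i | (i, m' - 1) ∈ A' ∧ (i, 0) ∈ A'}.Subsingleton)
    (hhor : {j | (0, j) ∈ A' ∧ (m' - 1, j) ∈ A'}.Subsingleton) {B : Set (ℕ × ℕ)}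
    {w₁ u₁ w₂ u₂ : ℕ × ℕ} (hw₁ : offset m' w₁ ∈ A') (hu₁ : offset m' u₁ ∈ A')
    (hw₂ : offset m' w₂ ∈ A') (hu₂ : offset m' u₂ ∈ A') (h₁ : SideAdj w₁ u₁) (h₂ : SideAdj w₂ u₂)
    (hw : block m' w₁ = block m' w₂) (hleaf : IsLeafIn B (block m' w₁))
    (hu₁B : block m' u₁ ∈ B) (hu₂B : block m' u₂ ∈ B)
    (hne₁ : block m' w₁ ≠ block m' u₁) (hne₂ : block m' w₂ ≠ block m' u₂) :
    w₁ = w₂ ∧ u₁ = u₂ := by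
  obtain ⟨d₁, hd₁⟩ := sideAdj_iff_exists_stepDir.1 h₁
  obtain ⟨d₂, hd₂⟩ := sideAdj_iff_exists_stepDir.1 h₂
  obtain ⟨hb, -⟩ | ⟨hb₁, he₁⟩ := stepDir_block_or_offset hm hw₁ hu₁ hd₁
  · exact absurd hb hne₁
  obtain ⟨hb, -⟩ | ⟨hb₂, he₂⟩ := stepDir_block_or_offset hm hw₂ hu₂ hd₂
  · exact absurd hb hne₂
  rw [← hw] at hb₂
  have hu : block m' u₁ = block m' u₂ := hleaf _ hu₁B _ hu₂B
    (sideAdj_iff_exists_stepDir.2 ⟨d₁, hb₁⟩) (sideAdj_iff_exists_stepDir.2 ⟨d₂, hb₂⟩)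
  obtain rfl : d₁ = d₂ := stepDir_dir_eq hb₁ (hu ▸ hb₂)
  obtain rfl : w₁ = w₂ := eq_of_block_eq_of_offset_eq hw (he₁.eq hvert hhor he₂)
  exact ⟨rfl, stepDir_right_eq hd₁ hd₂⟩

theorem isAcyclic_patternGraph_sep_block (hm : 0 < m') (hA : A' ⊆ grid m')
    (hac : (patternGraph A').IsAcyclic) {W S : Set (ℕ × ℕ)} (hS : S ⊆ subst m' A' W)
    (b : ℕ × ℕ) : (patternGraph {q ∈ S | block m' q = b}).IsAcyclic := by
  have hoff : ∀ q ∈ S, offset m' q ∈ A' := fun q hq => ((mem_subst_iff hm hA).1 (hS hq)).2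
  refine isAcyclic_patternGraph_of_injOn (fun q hq => hoff q hq.1)
    (fun q hq q' hq' h => eq_of_block_eq_of_offset_eq (hq.2.trans hq'.2.symm) h) ?_ hac
  intro w hw u hu h
  obtain ⟨d, hd⟩ := sideAdj_iff_exists_stepDir.1 h
  rcases stepDir_block_or_offset hm (hoff w hw.1) (hoff u hu.1) hd with ⟨-, ho⟩ | ⟨hb, -⟩
  · exact sideAdj_iff_exists_stepDir.2 ⟨d, ho⟩
  · rw [hw.2, hu.2] at hb
    exact ((sideAdj_iff_exists_stepDir.2 ⟨d, hb⟩).ne rfl).elim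

end Substitution

theorem IsOneDegenerate.subst {m' : ℕ} {A' W : Set (ℕ × ℕ)} (hm : 0 < m') (hA : A' ⊆ grid m')
    (hac : (patternGraph A').IsAcyclic)
    (hvert : {i | (i, m' - 1) ∈ A' ∧ (i, 0) ∈ A'}.Subsingleton)
    (hhor : {j | (0, j) ∈ A' ∧ (m' - 1, j) ∈ A'}.Subsingleton) (hW : IsOneDegenerate W) :
    IsOneDegenerate (subst m' A' W) := by
  intro S hS hfin hne
  have hmem : ∀ q ∈ S, block m' q ∈ W ∧ offset m' q ∈ A' := fun q hq =>
    (mem_subst_iff hm hA).1 (hS hq)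
  obtain ⟨_, ⟨q₀, hq₀, rfl⟩, hleafb⟩ := hW (block m' '' S)
    (image_subset_iff.2 fun q hq => (hmem q hq).1) (hfin.image _) (hne.image _)
  set Sp := {q ∈ S | block m' q = block m' q₀}
  have hdoor : ∀ w₁ ∈ Sp, ∀ w₂ ∈ Sp, ∀ u₁ ∈ S, ∀ u₂ ∈ S, u₁ ∉ Sp → u₂ ∉ Sp →
      SideAdj w₁ u₁ → SideAdj w₂ u₂ → w₁ = w₂ ∧ u₁ = u₂ :=
    fun w₁ hw₁ w₂ hw₂ u₁ hu₁ u₂ hu₂ hu₁' hu₂' h₁ h₂ =>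
      eq_of_sideAdj_of_isLeafIn_block (B := block m' '' S) hm hvert hhor
        (hmem w₁ hw₁.1).2 (hmem u₁ hu₁).2 (hmem w₂ hw₂.1).2 (hmem u₂ hu₂).2 h₁ h₂
        (hw₁.2.trans hw₂.2.symm) (hw₁.2 ▸ hleafb) ⟨u₁, hu₁, rfl⟩ ⟨u₂, hu₂, rfl⟩
        (fun h => hu₁' ⟨hu₁, h ▸ hw₁.2⟩) (fun h => hu₂' ⟨hu₂, h ▸ hw₂.2⟩)
  obtain ⟨w₀, hw₀, hw₀door⟩ : ∃ w₀ ∈ Sp, ∀ w ∈ Sp, ∀ u ∈ S, u ∉ Sp → SideAdj w u → w = w₀ := by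
    by_cases h : ∃ w ∈ Sp, ∃ u ∈ S, u ∉ Sp ∧ SideAdj w u
    · obtain ⟨w₀, hw₀, u₀, hu₀, hu₀', h₀⟩ := h
      exact ⟨w₀, hw₀, fun w hw u hu hu' h => (hdoor w hw w₀ hw₀ u hu u₀ hu₀ hu' hu₀' h h₀).1⟩
    · push Not at h
      exact ⟨q₀, ⟨hq₀, rfl⟩, fun w hw u hu hu' hwu => absurd hwu (h w hw u hu hu')⟩
  by_cases hsingle : ∃ x ∈ Sp, x ≠ w₀
  · obtain ⟨x, hx, hxw⟩ := hsingle
    obtain ⟨c, hc, hcw, hleaf⟩ := exists_isLeafIn_ne (hfin.subset (sep_subset _ _))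
      (isAcyclic_patternGraph_sep_block hm hA hac hS _) hw₀ hx hxw
    have hin : ∀ u ∈ S, SideAdj c u → u ∈ Sp := fun u hu h =>
      by_contra fun hu' => hcw (hw₀door c hc u hu hu' h)
    exact ⟨c, hc.1, fun u hu v hv hcu hcv => hleaf u (hin u hu hcu) v (hin v hv hcv) hcu hcv⟩
  · push Not at hsingle
    have hout : ∀ u ∈ S, SideAdj w₀ u → u ∉ Sp := fun u _ h hu' => h.ne (hsingle u hu').symm
    exact ⟨w₀, hw₀.1, fun u hu v hv hu' hv' =>
      (hdoor w₀ hw₀ w₀ hw₀ u hu v hv (hout u hu hu') (hout v hv hv') hu' hv').2⟩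

theorem subst_subset_grid {K m' : ℕ} {A' W : Set (ℕ × ℕ)} (hA : A' ⊆ grid m')
    (hW : W ⊆ grid K) : subst m' A' W ⊆ grid (K * m') := by
  rintro q ⟨p, hp, r, hr, rfl⟩
  obtain ⟨hp1, hp2⟩ := hW hp
  obtain ⟨hr1, hr2⟩ := hA hr
  constructor <;> dsimp only <;> nlinarith

theorem whites_subset_grid {m : ℕ → ℕ} {A : ℕ → Set (ℕ × ℕ)} (hA : ∀ k, A k ⊆ grid (m k))
    (n : ℕ) : whites m A n ⊆ grid (mProd m n) := by
  induction n with
  | zero => rintro _ rfl; exact ⟨by simp [mProd], by simp [mProd]⟩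
  | succ n ih => rw [mProd, Finset.prod_range_succ]; exact subst_subset_grid (hA n) ih

theorem isOneDegenerate_whites {m : ℕ → ℕ} {A : ℕ → Set (ℕ × ℕ)}
    (hlab : ∀ k, IsLabyrinthPattern (m k) (A k)) (n : ℕ) : IsOneDegenerate (whites m A n) := by
  induction n with
  | zero =>
    rintro S hS - ⟨w, hw⟩
    exact ⟨w, hw, fun u hu v hv _ _ => (hS hu).trans (hS hv).symm⟩
  | succ n ih =>
    obtain ⟨hm, ⟨-, hA⟩, htree, hvert, hhor, -⟩ := hlab n
    exact ih.subst (by omega) hA htree.isAcyclic (fun _ hi _ hj => hvert.unique hi hj)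
      (fun _ hi _ hj => hhor.unique hi hj)

end Labyrinth

open Labyrinth in
theorem black_path_to_border_general (m : ℕ → ℕ) (A : ℕ → Set (ℕ × ℕ))
    (hlab : ∀ k, IsLabyrinthPattern (m k) (A k)) (n : ℕ) :
    ∀ p ∈ blacks m A n, ∃ b ∈ blacks m A n, IsBorder (mProd m n) b ∧
      ∃ l, IsPathIn CornerAdj (blacks m A n) l p b := by
  intro p hp
  set M := mProd m n
  have hgrid : whites m A n ⊆ grid M := whites_subset_grid (fun k => (hlab k).2.1.2) n
  have hfin : (grid M).Finite := (finite_lt_nat M).prod (finite_lt_nat M)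
  have hframe : ∀ z ∈ shift '' grid M, 1 ≤ z.1 ∧ 1 ≤ z.2 ∧ z.2 < M + 1 := by
    rintro _ ⟨q, ⟨-, hq⟩, rfl⟩
    simp only [shift]
    omega
  obtain ⟨z, hz, hreach⟩ := (isOneDegenerate_whites hlab n).image_shift.exists_reachable_notMem
    hframe ((hfin.subset hgrid).image shift) (image_mono hgrid)
    (fun ⟨q, hq, he⟩ => hp.2 (shift_injective he ▸ hq : p ∈ _))
  obtain ⟨b, hb, hborder, hpb⟩ := exists_isBorder_of_walk_shift hreach.some hz hp rfl
  exact ⟨b, hb, hborder, exists_isPathIn_of_reachable hp hpb⟩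

open Labyrinth in
/-- From every black square of level `n` there is a path in `𝒢(ℬ_n)`
(black squares, adjacency: common side or corner) to a black border square of level `n`. -/
theorem black_path_to_border (m : ℕ → ℕ) (A : ℕ → Set (ℕ × ℕ))
    (hlab : ∀ k, IsLabyrinthPattern (m k) (A k)) (n : ℕ) (hn : 1 ≤ n) :
    ∀ p ∈ blacks m A n, ∃ b ∈ blacks m A n, IsBorder (mProd m n) b ∧
      ∃ l, IsPathIn CornerAdj (blacks m A n) l p b :=
  black_path_to_border_general m A hlab n
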